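/- Assuming the worst finite optimal value f̄_fin of the interval transportation problem is attained at some quasi-extreme scenario (Theorem of Garajová–Rada / Carrabs et al.), and that there exists at least one infeasible scenario (sum_i s̲_i < sum_j d̄_j), the value f̄_fin is attained at a balanced quasi-extreme scenario, i.e., f̄_fin = max over all balanced feasible quasi-extreme scenarios (C̄, s, d) of f(C̄, s, d). -/

import Mathlib

/-!
Lowering supplies and raising demands can only increase the optimal value: a plan for the
larger demands scales down column by column to a plan for the smaller ones. So it suffices to
move from the maximizing scenario `(s, d)` to a balanced quasi-extreme one inside the box
`sl ≤ s' ≤ s`, `d ≤ d' ≤ du`. Writing the scenario as the single vector `(s, -d)`, this is a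
greedy descent towards total `0`: first push the free coordinate down to its lower endpoint,
then lower the other coordinates one at a time, so that at every moment at most one
coordinate lies strictly between its endpoints. Total `0` is reachable because
`∑ sl ≤ ∑ du`.
-/

open Finset

/-- A feasible transportation plan for supplies `s` and demands `d`. -/
def IsPlan {m n : ℕ} (s : Fin m → ℝ) (d : Fin n → ℝ) (x : Fin m → Fin n → ℝ) : Prop :=
  (∀ i j, 0 ≤ x i j) ∧ (∀ i, ∑ j, x i j ≤ s i) ∧ (∀ j, ∑ i, x i j = d j)

/-- Total transportation cost of a plan `x` under cost matrix `C`. -/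
def cost {m n : ℕ} (C x : Fin m → Fin n → ℝ) : ℝ :=
  ∑ i, ∑ j, C i j * x i j

/-- Optimal value of the transportation problem with data `(C, s, d)`. -/
noncomputable def optVal {m n : ℕ} (C : Fin m → Fin n → ℝ) (s : Fin m → ℝ)
    (d : Fin n → ℝ) : ℝ :=
  sInf (cost C '' {x | IsPlan s d x})

/-- A supply-demand vector is quasi-extreme if all its coordinates except at most
one (a supply coordinate, or a demand coordinate) lie at the interval endpoints. -/
def QuasiExtreme {m n : ℕ} (sl su s : Fin m → ℝ) (dl du : Fin n → ℝ)
    (d : Fin n → ℝ) : Prop :=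
  (∃ k : Fin m, (∀ i, i ≠ k → s i = sl i ∨ s i = su i) ∧
      (∀ j, d j = dl j ∨ d j = du j)) ∨
  (∃ k : Fin n, (∀ j, j ≠ k → d j = dl j ∨ d j = du j) ∧
      (∀ i, s i = sl i ∨ s i = su i))

def IsQuasiExtreme {ι : Type*} (lo hi x : ι → ℝ) : Prop :=
  ∃ p, ∀ i, i ≠ p → x i = lo i ∨ x i = hi i

section Greedy

variable {ι : Type*}

theorem exists_quasiExtreme_between_sum_eq [Nonempty ι] (S : Finset ι) {a b : ι → ℝ}
    (hab : a ≤ b) {t : ℝ} (ha : ∑ i ∈ S, a i ≤ t) (hb : t ≤ ∑ i ∈ S, b i) :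
    ∃ c, a ≤ c ∧ c ≤ b ∧ ∑ i ∈ S, c i = t ∧ IsQuasiExtreme a b c := by
  classical
  induction S using Finset.induction_on generalizing t with
  | empty =>
    exact ⟨a, le_rfl, hab, by simpa using ha.antisymm (by simpa using hb),
      Classical.arbitrary ι, fun i _ => Or.inl rfl⟩
  | insert j S hj ih =>
    rw [sum_insert hj] at ha hb
    by_cases hj_low : t - a j ≤ ∑ i ∈ S, b i
    · obtain ⟨c, hac, hcb, hsum, q, hq⟩ := ih (t := t - a j) (by linarith) hj_low
      refine ⟨Function.update c j (a j), le_update_iff.2 ⟨le_rfl, fun i _ => hac i⟩,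
        update_le_iff.2 ⟨hab j, fun i _ => hcb i⟩, ?_, q, fun i hi => ?_⟩
      · rw [sum_insert hj, Function.update_self, sum_update_of_notMem hj, hsum]; ring
      · rcases eq_or_ne i j with rfl | hij
        · simp
        · simpa [Function.update_of_ne hij] using hq i hi
    · refine ⟨Function.update b j (t - ∑ i ∈ S, b i),
        le_update_iff.2 ⟨by linarith, fun i _ => hab i⟩,
        update_le_iff.2 ⟨by linarith, fun i _ => le_rfl⟩, ?_, j, fun i hi => ?_⟩
      · rw [sum_insert hj, Function.update_self, sum_update_of_notMem hj]; ring
      · simp [Function.update_of_ne hi]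

theorem sum_update_eq_sum_sub_add [Fintype ι] [DecidableEq ι] (f : ι → ℝ) (p : ι) (v : ℝ) :
    ∑ i, Function.update f p v i = ∑ i, f i - f p + v := by
  rw [sum_update_of_mem (mem_univ p), sum_eq_add_sum_sdiff_singleton_of_mem (mem_univ p) f]
  ring

theorem IsQuasiExtreme.exists_le_sum_eq [Fintype ι] {lo hi b : ι → ℝ}
    (hb : IsQuasiExtreme lo hi b) (hlo : lo ≤ b) {t : ℝ} (h₁ : ∑ i, lo i ≤ t) (h₂ : t ≤ ∑ i, b i) :
    ∃ c, lo ≤ c ∧ c ≤ b ∧ ∑ i, c i = t ∧ IsQuasiExtreme lo hi c := by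
  classical
  obtain ⟨p, hp⟩ := hb
  have : Nonempty ι := ⟨p⟩
  by_cases hp_low : t ≤ ∑ i, Function.update b p (lo p) i
  · obtain ⟨c, hlc, hcb', hsum, q, hq⟩ := exists_quasiExtreme_between_sum_eq univ
      (le_update_iff.2 ⟨le_rfl, fun i _ => hlo i⟩) h₁ hp_low
    refine ⟨c, hlc, hcb'.trans (update_le_iff.2 ⟨hlo p, fun i _ => le_rfl⟩), hsum, q,
      fun i hi => ?_⟩
    rcases eq_or_ne i p with rfl | hip
    · exact .inl (by simpa using hq i hi)
    · rcases hq i hi with h | h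
      · exact .inl h
      · rw [h, Function.update_of_ne hip]
        exact hp i hip
  · rw [sum_update_eq_sum_sub_add] at hp_low
    refine ⟨Function.update b p (b p - (∑ i, b i - t)),
      le_update_iff.2 ⟨by linarith, fun i _ => hlo i⟩,
      update_le_iff.2 ⟨by linarith, fun i _ => le_rfl⟩, ?_, p,
      fun i hi => by simpa [Function.update_of_ne hi] using hp i hi⟩
    rw [sum_update_eq_sum_sub_add]
    ring

end Greedy

theorem quasiExtreme_iff_isQuasiExtreme_sum_elim {m n : ℕ} (sl su s : Fin m → ℝ)
    (dl du d : Fin n → ℝ) :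
    QuasiExtreme sl su s dl du d ↔
      IsQuasiExtreme (Sum.elim sl (-du)) (Sum.elim su (-dl)) (Sum.elim s (-d)) := by
  simp only [QuasiExtreme, IsQuasiExtreme, Sum.exists, Sum.forall, ne_eq, Sum.inl.injEq,
    Sum.inr.injEq, reduceCtorEq, not_false_eq_true, Sum.elim_inl, Sum.elim_inr, Pi.neg_apply,
    neg_inj, forall_const]
  simp only [or_comm (a := d _ = du _)]
  exact or_congr Iff.rfl (exists_congr fun _ => and_comm)

theorem exists_balanced_quasiExtreme {m n : ℕ} {sl su s : Fin m → ℝ} {dl du d : Fin n → ℝ}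
    (hqe : QuasiExtreme sl su s dl du d) (hs : ∀ i, sl i ≤ s i) (hd : ∀ j, d j ≤ du j)
    (hinfeas : ∑ i, sl i ≤ ∑ j, du j) (hfeas : ∑ j, d j ≤ ∑ i, s i) :
    ∃ s₂ d₂, (∀ i, sl i ≤ s₂ i ∧ s₂ i ≤ s i) ∧ (∀ j, d j ≤ d₂ j ∧ d₂ j ≤ du j) ∧
      QuasiExtreme sl su s₂ dl du d₂ ∧ ∑ i, s₂ i = ∑ j, d₂ j := by
  rw [quasiExtreme_iff_isQuasiExtreme_sum_elim] at hqe
  obtain ⟨c, hlc, hcb, hsum, hqc⟩ := hqe.exists_le_sum_eq (t := 0)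
    (Sum.forall.2 ⟨hs, fun j => neg_le_neg (hd j)⟩)
    (by simpa [Fintype.sum_sum_type, ← sub_eq_add_neg] using hinfeas)
    (by simpa [Fintype.sum_sum_type, ← sub_eq_add_neg] using hfeas)
  refine ⟨c ∘ Sum.inl, -(c ∘ Sum.inr), fun i => ⟨hlc (.inl i), hcb (.inl i)⟩,
    fun j => ⟨le_neg.2 (hcb (.inr j)), neg_le.2 (hlc (.inr j))⟩, ?_, ?_⟩
  · rwa [quasiExtreme_iff_isQuasiExtreme_sum_elim, neg_neg, Sum.elim_comp_inl_inr]
  · rw [Fintype.sum_sum_type] at hsum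
    simpa [eq_neg_iff_add_eq_zero] using hsum

section OptVal

variable {m n : ℕ}

theorem exists_isPlan {s : Fin m → ℝ} {d : Fin n → ℝ} (hs : 0 ≤ s) (hd : 0 ≤ d)
    (h : ∑ j, d j ≤ ∑ i, s i) : ∃ x, IsPlan s d x := by
  set S := ∑ i, s i
  rcases (sum_nonneg fun i _ => hs i : 0 ≤ S).eq_or_lt with hS | hS
  · have hd0 : ∀ j, d j = 0 := fun j =>
      le_antisymm ((single_le_sum (fun j _ => hd j) (mem_univ j)).trans (hS ▸ h)) (hd j)
    exact ⟨0, fun _ _ => le_rfl, fun i => by simpa using hs i, fun j => by simp [hd0 j]⟩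
  · refine ⟨fun i j => s i * d j / S, fun i j => div_nonneg (mul_nonneg (hs i) (hd j)) hS.le,
      fun i => ?_, fun j => ?_⟩
    · rw [← sum_div, ← mul_sum, div_le_iff₀ hS]
      exact mul_le_mul_of_nonneg_left h (hs i)
    · rw [← sum_div, ← sum_mul, mul_div_cancel_left₀ _ hS.ne']

theorem IsPlan.exists_le_of_le {s s' : Fin m → ℝ} {d d' : Fin n → ℝ} {x : Fin m → Fin n → ℝ}
    (hx : IsPlan s' d' x) (hs : s' ≤ s) (hd : 0 ≤ d) (hdd : d ≤ d') :
    ∃ y, IsPlan s d y ∧ y ≤ x := by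
  have hratio : ∀ j, 0 ≤ d j / d' j ∧ d j / d' j ≤ 1 := fun j =>
    ⟨div_nonneg (hd j) ((hd j).trans (hdd j)), div_le_one_of_le₀ (hdd j) ((hd j).trans (hdd j))⟩
  have hyx : (fun i j => x i j * (d j / d' j)) ≤ x := fun i j =>
    mul_le_of_le_one_right (hx.1 i j) (hratio j).2
  refine ⟨_, ⟨fun i j => mul_nonneg (hx.1 i j) (hratio j).1, fun i => ?_, fun j => ?_⟩, hyx⟩
  · exact ((sum_le_sum fun j _ => hyx i j).trans (hx.2.1 i)).trans (hs i)
  · rw [← sum_mul, hx.2.2 j]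
    rcases eq_or_ne (d' j) 0 with h0 | h0
    · simp [h0, le_antisymm (h0 ▸ hdd j : d j ≤ 0) (hd j)]
    · exact mul_div_cancel₀ _ h0

theorem cost_mono {C x y : Fin m → Fin n → ℝ} (hC : 0 ≤ C) (hxy : x ≤ y) :
    cost C x ≤ cost C y :=
  sum_le_sum fun i _ => sum_le_sum fun j _ => mul_le_mul_of_nonneg_left (hxy i j) (hC i j)

theorem bddBelow_cost_image {C : Fin m → Fin n → ℝ} (hC : 0 ≤ C) (s : Fin m → ℝ)
    (d : Fin n → ℝ) : BddBelow (cost C '' {x | IsPlan s d x}) := by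
  refine ⟨0, ?_⟩
  rintro _ ⟨x, hx, rfl⟩
  simpa [cost] using cost_mono hC (show 0 ≤ x from hx.1)

theorem optVal_le_optVal {C : Fin m → Fin n → ℝ} (hC : 0 ≤ C) {s s' : Fin m → ℝ}
    {d d' : Fin n → ℝ} (hs : s' ≤ s) (hd : 0 ≤ d) (hdd : d ≤ d') (hfeas : ∃ x, IsPlan s' d' x) :
    optVal C s d ≤ optVal C s' d' := by
  obtain ⟨x₀, hx₀⟩ := hfeas
  refine le_csInf ⟨_, x₀, hx₀, rfl⟩ ?_
  rintro _ ⟨x, hx, rfl⟩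
  obtain ⟨y, hy, hyx⟩ := hx.exists_le_of_le hs hd hdd
  exact (csInf_le (bddBelow_cost_image hC s d) ⟨y, hy, rfl⟩).trans (cost_mono hC hyx)

end OptVal

theorem worst_value_balanced_quasi_extreme_general {m n : ℕ} (Cl Cu : Fin m → Fin n → ℝ)
    (sl su : Fin m → ℝ) (dl du : Fin n → ℝ)
    (hCl : ∀ i j, 0 ≤ Cl i j) (hC : ∀ i j, Cl i j ≤ Cu i j)
    (hsl : ∀ i, 0 ≤ sl i)
    (hdl : ∀ j, 0 ≤ dl j)
    (hinfeas : ∑ i, sl i < ∑ j, du j)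
    (hattain : ∃ (s : Fin m → ℝ) (d : Fin n → ℝ),
      (∀ i, sl i ≤ s i ∧ s i ≤ su i) ∧ (∀ j, dl j ≤ d j ∧ d j ≤ du j) ∧
      QuasiExtreme sl su s dl du d ∧ ∑ j, d j ≤ ∑ i, s i ∧
      IsGreatest {v | ∃ (C : Fin m → Fin n → ℝ) (s' : Fin m → ℝ) (d' : Fin n → ℝ),
          (∀ i j, Cl i j ≤ C i j ∧ C i j ≤ Cu i j) ∧
          (∀ i, sl i ≤ s' i ∧ s' i ≤ su i) ∧ (∀ j, dl j ≤ d' j ∧ d' j ≤ du j) ∧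
          ∑ j, d' j ≤ ∑ i, s' i ∧ v = optVal C s' d'} (optVal Cu s d)) :
    ∃ (s : Fin m → ℝ) (d : Fin n → ℝ),
      (∀ i, sl i ≤ s i ∧ s i ≤ su i) ∧ (∀ j, dl j ≤ d j ∧ d j ≤ du j) ∧
      QuasiExtreme sl su s dl du d ∧ ∑ i, s i = ∑ j, d j ∧
      IsGreatest {v | ∃ (C : Fin m → Fin n → ℝ) (s' : Fin m → ℝ) (d' : Fin n → ℝ),
          (∀ i j, Cl i j ≤ C i j ∧ C i j ≤ Cu i j) ∧
          (∀ i, sl i ≤ s' i ∧ s' i ≤ su i) ∧ (∀ j, dl j ≤ d' j ∧ d' j ≤ du j) ∧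
          ∑ j, d' j ≤ ∑ i, s' i ∧ v = optVal C s' d'} (optVal Cu s d) := by
  obtain ⟨s, d, hs, hd, hqe, hfeas, hmax⟩ := hattain
  obtain ⟨s₂, d₂, hs₂, hd₂, hqe₂, hbal⟩ := exists_balanced_quasiExtreme hqe
    (fun i => (hs i).1) (fun j => (hd j).2) hinfeas.le hfeas
  have hs₂b : ∀ i, sl i ≤ s₂ i ∧ s₂ i ≤ su i := fun i => ⟨(hs₂ i).1, (hs₂ i).2.trans (hs i).2⟩
  have hd₂b : ∀ j, dl j ≤ d₂ j ∧ d₂ j ≤ du j := fun j => ⟨(hd j).1.trans (hd₂ j).1, (hd₂ j).2⟩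
  have hd0 : 0 ≤ d := fun j => (hdl j).trans (hd j).1
  have hplan₂ : ∃ x, IsPlan s₂ d₂ x :=
    exists_isPlan (fun i => (hsl i).trans (hs₂b i).1) (fun j => (hd0 j).trans (hd₂ j).1) hbal.ge
  have hval : optVal Cu s₂ d₂ = optVal Cu s d :=
    le_antisymm (hmax.2 ⟨Cu, s₂, d₂, fun i j => ⟨hC i j, le_rfl⟩, hs₂b, hd₂b, hbal.ge, rfl⟩)
      (optVal_le_optVal (fun i j => (hCl i j).trans (hC i j)) (fun i => (hs₂ i).2) hd0
        (fun j => (hd₂ j).1) hplan₂)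
  exact ⟨s₂, d₂, hs₂b, hd₂b, hqe₂, hbal, hval ▸ hmax⟩

/-- If the worst finite optimal value is attained at a quasi-extreme scenario with
cost matrix C̄, and there exists an infeasible scenario, then it is attained at a
balanced quasi-extreme scenario. -/
theorem worst_value_balanced_quasi_extreme {m n : ℕ} (Cl Cu : Fin m → Fin n → ℝ)
    (sl su : Fin m → ℝ) (dl du : Fin n → ℝ)
    (hCl : ∀ i j, 0 ≤ Cl i j) (hC : ∀ i j, Cl i j ≤ Cu i j)
    (hsl : ∀ i, 0 ≤ sl i) (hslsu : ∀ i, sl i ≤ su i)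
    (hdl : ∀ j, 0 ≤ dl j) (hdldu : ∀ j, dl j ≤ du j)
    (hinfeas : ∑ i, sl i < ∑ j, du j)
    (hattain : ∃ (s : Fin m → ℝ) (d : Fin n → ℝ),
      (∀ i, sl i ≤ s i ∧ s i ≤ su i) ∧ (∀ j, dl j ≤ d j ∧ d j ≤ du j) ∧
      QuasiExtreme sl su s dl du d ∧ ∑ j, d j ≤ ∑ i, s i ∧
      IsGreatest {v | ∃ (C : Fin m → Fin n → ℝ) (s' : Fin m → ℝ) (d' : Fin n → ℝ),
          (∀ i j, Cl i j ≤ C i j ∧ C i j ≤ Cu i j) ∧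
          (∀ i, sl i ≤ s' i ∧ s' i ≤ su i) ∧ (∀ j, dl j ≤ d' j ∧ d' j ≤ du j) ∧
          ∑ j, d' j ≤ ∑ i, s' i ∧ v = optVal C s' d'} (optVal Cu s d)) :
    ∃ (s : Fin m → ℝ) (d : Fin n → ℝ),
      (∀ i, sl i ≤ s i ∧ s i ≤ su i) ∧ (∀ j, dl j ≤ d j ∧ d j ≤ du j) ∧
      QuasiExtreme sl su s dl du d ∧ ∑ i, s i = ∑ j, d j ∧
      IsGreatest {v | ∃ (C : Fin m → Fin n → ℝ) (s' : Fin m → ℝ) (d' : Fin n → ℝ),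
          (∀ i j, Cl i j ≤ C i j ∧ C i j ≤ Cu i j) ∧
          (∀ i, sl i ≤ s' i ∧ s' i ≤ su i) ∧ (∀ j, dl j ≤ d' j ∧ d' j ≤ du j) ∧
          ∑ j, d' j ≤ ∑ i, s' i ∧ v = optVal C s' d'} (optVal Cu s d) :=
  worst_value_balanced_quasi_extreme_general Cl Cu sl su dl du hCl hC hsl hdl hinfeas hattain
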